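/- arXiv:1210.2358 — 4 statements merged into one kernel-verified Lean document; each statement's English description precedes it below -/
import Mathlib

section
/- For every integer k ≥ 1, the function Λ_k is differentiable on the real interval (0,1), and for all t ∈ (0,1) its derivative is Λ_k′(t) = (−2πi)^{−k} · (−log t)^{k−1} / ((k−1)! · (1−t)). (This differential identity is the computational content of the fact that f = 1 + Σ_{k≥1} Λ_k·e^k is a global, i.e. single-valued holomorphic, section of the polylogarithm variation tensored with the structure sheaf.) -/
open scoped Nat

/-- The polylogarithm power series `Li_j(t) = ∑_{k ≥ 1} t^k / k^j` for real `t ∈ (0,1)`,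
viewed as a complex number. -/
noncomputable def LiSeries (j : ℕ) (t : ℝ) : ℂ :=
  ∑' k : ℕ, (t : ℂ) ^ (k + 1) / ((k + 1 : ℕ) : ℂ) ^ j

/-- `Λ_k(t) = (1/(-2πi)^k) ∑_{n=1}^{k} ((-log t)^{k-n} / (k-n)!) · Li_n(t)`.
(The sum is written over `m = n - 1 ∈ {0, …, k-1}`.) -/
noncomputable def Lambda (k : ℕ) (t : ℝ) : ℂ :=
  (1 / (-(2 * Real.pi * Complex.I)) ^ k) *
    ∑ m ∈ Finset.range k,
      ((-Real.log t : ℂ) ^ (k - (m + 1)) / (Nat.factorial (k - (m + 1)) : ℂ)) *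
        LiSeries (m + 1) t

/-!
With `x^[p] = (-log t)^p / p!`, we have `Λ_{n+1} = (-2πi)^{-(n+1)} ∑_{p+q=n} x^[p] · Li_{q+1}`.
Since `(x^[p+1])' = -x^[p] / t`, `x^[0]' = 0` and `Li_{q+1}' = Li_q / t` (termwise differentiation),
the Leibniz rule makes the derivative of the sum telescope to `x^[n] · Li_0 / t`, and
`Li_0(t) = t / (1 - t)` is a geometric series.
-/

open Finset

noncomputable def dividedPowNegLog (p : ℕ) (s : ℝ) : ℂ :=
  (-Real.log s : ℂ) ^ p / (p ! : ℂ)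

lemma hasDerivAt_dividedPowNegLog_succ (p : ℕ) {t : ℝ} (ht : t ≠ 0) :
    HasDerivAt (dividedPowNegLog (p + 1)) (-(dividedPowNegLog p t / t)) t := by
  have hlog : HasDerivAt (fun s : ℝ => (-Real.log s : ℂ)) (-(1 / t : ℝ) : ℂ) t := by
    simpa using ((Real.hasDerivAt_log ht).ofReal_comp).fun_neg
  refine ((hlog.fun_pow (p + 1)).div_const ((p + 1)! : ℂ)).congr_deriv ?_
  rw [dividedPowNegLog, Nat.factorial_succ, Nat.add_sub_cancel]
  push_cast
  field_simp

lemma dividedPowNegLog_zero : dividedPowNegLog 0 = 1 :=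
  funext fun s => by simp [dividedPowNegLog]

lemma LiSeries_eq_mul_tsum (j : ℕ) (t : ℝ) :
    LiSeries j t = t * ∑' k : ℕ, (t : ℂ) ^ k / ((k + 1 : ℕ) : ℂ) ^ j := by
  rw [LiSeries, ← tsum_mul_left]
  exact tsum_congr fun k => by rw [pow_succ', mul_div_assoc]

lemma LiSeries_zero {t : ℝ} (ht : |t| < 1) : LiSeries 0 t = t / (1 - t) := by
  have hnorm : ‖(t : ℂ)‖ < 1 := by rwa [Complex.norm_real, Real.norm_eq_abs]
  rw [LiSeries_eq_mul_tsum]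
  simp [tsum_geometric_of_norm_lt_one hnorm, div_eq_mul_inv]

lemma hasDerivAt_LiSeries_succ (j : ℕ) {t : ℝ} (ht : |t| < 1) :
    HasDerivAt (LiSeries (j + 1)) (∑' k : ℕ, (t : ℂ) ^ k / ((k + 1 : ℕ) : ℂ) ^ j) t := by
  set ρ : ℝ := (1 + |t|) / 2 with hρ_def
  have htρ : |t| < ρ := by rw [hρ_def]; linarith
  have hρ : ‖ρ‖ < 1 := by
    rw [Real.norm_eq_abs, abs_lt]; constructor <;> linarith [abs_nonneg t]
  have hterm : ∀ (k : ℕ) (s : ℝ),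
      HasDerivAt (fun s : ℝ => (s : ℂ) ^ (k + 1) / ((k + 1 : ℕ) : ℂ) ^ (j + 1))
        ((s : ℂ) ^ k / ((k + 1 : ℕ) : ℂ) ^ j) s := by
    intro k s
    refine (((hasDerivAt_pow (k + 1) (s : ℂ)).comp_ofReal).div_const
      (((k + 1 : ℕ) : ℂ) ^ (j + 1))).congr_deriv ?_
    have : ((k + 1 : ℕ) : ℂ) ≠ 0 := Nat.cast_ne_zero.mpr k.succ_ne_zero
    rw [Nat.add_sub_cancel]
    field_simp
    ring
  have hbound : ∀ (k : ℕ) (s : ℝ), s ∈ Metric.ball 0 ρ →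
      ‖(s : ℂ) ^ k / ((k + 1 : ℕ) : ℂ) ^ j‖ ≤ ρ ^ k := by
    intro k s hs
    rw [mem_ball_zero_iff, Real.norm_eq_abs] at hs
    rw [norm_div, norm_pow, norm_pow, Complex.norm_real, Complex.norm_natCast, Real.norm_eq_abs]
    calc |s| ^ k / ((k + 1 : ℕ) : ℝ) ^ j ≤ |s| ^ k / 1 := by
          gcongr; exact one_le_pow₀ (by simp)
      _ ≤ ρ ^ k := by rw [div_one]; gcongr
  -- termwise differentiation on the ball of radius `ρ`, anchored at its centre where every term
  -- vanishes
  exact hasDerivAt_tsum_of_isPreconnected (summable_geometric_of_norm_lt_one hρ)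
    Metric.isOpen_ball (convex_ball 0 ρ).isPreconnected (fun k s _ => hterm k s) hbound
    (Metric.mem_ball_self (by linarith [abs_nonneg t])) (by simp)
    (by rwa [mem_ball_zero_iff, Real.norm_eq_abs])

theorem sum_range_succ_mul_shift_telescope {R : Type*} [CommRing R] (n : ℕ)
    (a b a' b' : ℕ → R) (c : R) (ha'_zero : a' 0 = 0) (ha' : ∀ p, a' (p + 1) = -(c * a p))
    (hb' : ∀ q, b' (q + 1) = c * b q) :
    ∑ m ∈ range (n + 1), (a' (n - m) * b (m + 1) + a (n - m) * b' (m + 1)) = c * a n * b 0 := by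
  have hshift : ∀ m ∈ range n,
      a' (n - m) * b (m + 1) = -(a (n - (m + 1)) * (c * b (m + 1))) := by
    intro m hm
    obtain ⟨p, hp⟩ : ∃ p, n - m = p + 1 := ⟨n - (m + 1), by grind⟩
    rw [hp, ha', show n - (m + 1) = p by omega]
    ring
  rw [sum_add_distrib, sum_range_succ, sum_range_succ', Nat.sub_self, ha'_zero,
    sum_congr rfl hshift]
  simp only [hb', sum_neg_distrib, Nat.sub_zero]
  ring

/-- For `k ≥ 1`, the function `Λ_k` is differentiable on `(0,1)` with derivative
`Λ_k'(t) = (-2πi)^{-k} · (-log t)^{k-1} / ((k-1)! · (1 - t))`. -/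
theorem lambda_hasDerivAt (k : ℕ) (hk : 1 ≤ k) (t : ℝ) (ht : t ∈ Set.Ioo (0 : ℝ) 1) :
    HasDerivAt (fun s : ℝ => Lambda k s)
      ((-(2 * Real.pi * Complex.I)) ^ (-(k : ℤ)) * (-Real.log t : ℂ) ^ (k - 1) /
        ((Nat.factorial (k - 1) : ℂ) * (1 - (t : ℂ)))) t := by
  obtain ⟨n, rfl⟩ : ∃ n, k = n + 1 := ⟨k - 1, by omega⟩
  have ht0 : t ≠ 0 := ht.1.ne'
  have ht0' : (t : ℂ) ≠ 0 := Complex.ofReal_ne_zero.mpr ht0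
  have ht1 : |t| < 1 := abs_lt.mpr ⟨by linarith [ht.1], ht.2⟩
  have hLambda : (fun s : ℝ => Lambda (n + 1) s) =
      fun s => (1 / (-(2 * Real.pi * Complex.I)) ^ (n + 1)) *
        ∑ m ∈ range (n + 1), dividedPowNegLog (n - m) s * LiSeries (m + 1) s := by
    funext s
    simp only [Lambda, dividedPowNegLog, Nat.add_sub_add_right]
  have hA : ∀ p, DifferentiableAt ℝ (dividedPowNegLog p) t := by
    rintro (_ | p)
    · rw [dividedPowNegLog_zero]; exact differentiableAt_const _
    · exact (hasDerivAt_dividedPowNegLog_succ p ht0).differentiableAt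
  have hL : ∀ q, DifferentiableAt ℝ (LiSeries (q + 1)) t := fun q =>
    (hasDerivAt_LiSeries_succ q ht1).differentiableAt
  rw [hLambda]
  refine ((HasDerivAt.fun_sum fun m _ => (hA (n - m)).hasDerivAt.mul (hL m).hasDerivAt).const_mul
    _).congr_deriv ?_
  rw [sum_range_succ_mul_shift_telescope n (fun p => dividedPowNegLog p t) (fun q => LiSeries q t)
    (fun p => deriv (dividedPowNegLog p) t) (fun q => deriv (LiSeries q) t) (t : ℂ)⁻¹
    (by rw [dividedPowNegLog_zero]; exact deriv_const t 1)
    (fun p => by rw [(hasDerivAt_dividedPowNegLog_succ p ht0).deriv, div_eq_inv_mul])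
    (fun q => by rw [(hasDerivAt_LiSeries_succ q ht1).deriv, LiSeries_eq_mul_tsum,
      inv_mul_cancel_left₀ ht0']),
    LiSeries_zero ht1]
  have h1t : (1 - t : ℂ) ≠ 0 := sub_ne_zero.mpr (by exact_mod_cast ht.2.ne')
  simp only [dividedPowNegLog, zpow_neg, zpow_natCast, Nat.add_sub_cancel]
  field_simp
end

section
/- Let F be the free group on two generators a and b, and let M = ℚ⟦X⟧ as a ℚ-vector space, made into an F-representation by letting a act as multiplication by the power series exp(X) = Σ_{n≥0} Xⁿ/n! and b act as the identity. Then the group cohomology of F with coefficients in M satisfies: H⁰(F, M) = 0, and H¹(F, M) is isomorphic as a ℚ-vector space to ℚ × ℚ⟦X⟧. (This is the computation H⁰(U, Log_U) = 0 and H¹(U, Log_U) = ℚ(−1) ⊕ ∏_{k≥0} ℚ(k−1) underlying rigidity, expressed on underlying local systems via the fundamental group of ℙ¹(ℂ)∖{0,1,∞}, which is free on the loops α₀, α₁.) -/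
open PowerSeries

/-- `exp X = ∑_{n ≥ 0} Xⁿ/n!` as a unit of `ℚ⟦X⟧`. -/
noncomputable def expUnit : (PowerSeries ℚ)ˣ :=
  (show IsUnit (PowerSeries.exp ℚ) from
    PowerSeries.isUnit_iff_constantCoeff.mpr
      (by rw [PowerSeries.constantCoeff_exp]; exact isUnit_one)).unit

/-- The homomorphism from the free group on two generators `a = of true`, `b = of false`
to units of `ℚ⟦X⟧`, sending `a` to `exp X` and `b` to `1`. -/
noncomputable def freeGroupToUnits : FreeGroup Bool →* (PowerSeries ℚ)ˣ :=
  FreeGroup.lift (fun b => if b then expUnit else 1)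

/-- The representation of the free group on two generators on `M = ℚ⟦X⟧`, where
`a = of true` acts as multiplication by `exp X` and `b = of false` acts as the identity. -/
noncomputable def logRep : Representation ℚ (FreeGroup Bool) (PowerSeries ℚ) :=
  ((Algebra.lmul ℚ (PowerSeries ℚ)).toRingHom.toMonoidHom.comp
    (Units.coeHom (PowerSeries ℚ))).comp freeGroupToUnits

/-!
A 1-cocycle on a free group is determined by its values on the generators, and all values occur:
the homomorphism `F → M ⋊ F` sending each generator `s` to `(m_s, s)` has a cocycle as its
`M`-component. Hence `Z¹(F, M) ≅ M × M`, and `B¹(F, M)` consists of the pairs `((eˣ - 1) m, 0)`.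
As `eˣ - 1` is `X` times a unit, `(eˣ - 1) ℚ⟦X⟧` is the ideal of series without constant term,
so `H¹(F, M) ≅ ℚ × ℚ⟦X⟧`; and `eˣ m = m` forces `m = 0`, so `H⁰(F, M) = 0`.
-/

universe u

namespace Representation

variable {k G V : Type*} [CommRing k] [Group G] [AddCommGroup V] [Module k V]

def toMulAutMultiplicative (ρ : Representation k G V) : G →* MulAut (Multiplicative V) where
  toFun g :=
    (LinearMap.GeneralLinearGroup.toLinearEquiv (ρ.asGroupHom g)).toAddEquiv.toMultiplicative
  map_one' := by ext; simp
  map_mul' g h := by ext; simp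

lemma toMulAutMultiplicative_apply (ρ : Representation k G V) (g : G) (v : Multiplicative V) :
    ρ.toMulAutMultiplicative g v = Multiplicative.ofAdd (ρ g v.toAdd) := rfl

end Representation

namespace groupCohomology

section

variable {k G W : Type u} [CommRing k] [Group G] {A : Rep k G} [AddCommGroup W] [Module k W]

theorem cocycles₁_map_mul (f : cocycles₁ A) (g h : G) : f (g * h) = A.ρ g (f h) + f g :=
  (mem_cocycles₁_iff (f : G → A)).1 f.2 g h

noncomputable def H1EquivOfSurjective (Ψ : cocycles₁ A →ₗ[k] W) (hΨ : Function.Surjective Ψ)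
    (hker : ∀ f, Ψ f = 0 ↔ ⇑f ∈ coboundaries₁ A) : H1 A ≃ₗ[k] W :=
  have hπ : Function.Surjective (H1π A).hom := (ModuleCat.epi_iff_surjective _).1 inferInstance
  have hkerπ : LinearMap.ker (H1π A).hom = LinearMap.ker Ψ := by
    ext f
    rw [LinearMap.mem_ker, LinearMap.mem_ker, hker]
    exact H1π_eq_zero_iff f
  ((H1π A).hom.quotKerEquivOfSurjective hπ).symm ≪≫ₗ Submodule.quotEquivOfEq _ _ hkerπ ≪≫ₗ
    Ψ.quotKerEquivOfSurjective hΨ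

end

section FreeGroup

open FreeGroup

variable {k α : Type u} [CommRing k] {A : Rep k (FreeGroup α)}

theorem cocycles₁_ext_freeGroup {f₁ f₂ : cocycles₁ A} (h : ∀ a, f₁ (of a) = f₂ (of a)) :
    f₁ = f₂ := by
  refine cocycles₁_ext fun g => ?_
  induction g using FreeGroup.induction_on with
  | C1 => simp
  | of a => exact h a
  | inv_of a _ =>
    apply (A.ρ.apply_bijective (of a)).injective
    rw [cocycles₁_map_inv, cocycles₁_map_inv, h]
  | mul g₁ g₂ h₁ h₂ =>
    rw [cocycles₁_map_mul, cocycles₁_map_mul, h₁, h₂]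

def liftSemidirect (f : α → A) :
    FreeGroup α →* Multiplicative A ⋊[A.ρ.toMulAutMultiplicative] FreeGroup α :=
  FreeGroup.lift fun a => ⟨Multiplicative.ofAdd (f a), of a⟩

theorem liftSemidirect_right (f : α → A) (g : FreeGroup α) : (liftSemidirect f g).right = g := by
  have : SemidirectProduct.rightHom.comp (liftSemidirect f) = MonoidHom.id _ :=
    FreeGroup.ext_hom _ _ fun a => by simp [liftSemidirect]
  exact DFunLike.congr_fun this g

theorem exists_cocycles₁_freeGroup (f : α → A) : ∃ c : cocycles₁ A, ∀ a, c (of a) = f a := by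
  refine ⟨⟨fun g => (liftSemidirect f g).left.toAdd, (mem_cocycles₁_iff _).2 fun g h => ?_⟩,
    fun a => by simp [liftSemidirect]⟩
  simp [liftSemidirect_right, Representation.toMulAutMultiplicative_apply, add_comm]

noncomputable def cocycles₁EquivFreeGroup : cocycles₁ A ≃ₗ[k] (α → A) :=
  LinearEquiv.ofBijective
    { toFun f a := f (of a)
      map_add' _ _ := rfl
      map_smul' _ _ := rfl }
    ⟨fun _ _ h => cocycles₁_ext_freeGroup (congrFun h),
      fun f => (exists_cocycles₁_freeGroup f).imp fun _ => funext⟩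

@[simp] lemma cocycles₁EquivFreeGroup_apply (f : cocycles₁ A) (a : α) :
    cocycles₁EquivFreeGroup f a = f (of a) := rfl

theorem mem_coboundaries₁_iff_freeGroup (f : cocycles₁ A) :
    ⇑f ∈ coboundaries₁ A ↔ ∃ m : A, ∀ a, A.ρ (of a) m - m = f (of a) := by
  constructor
  · rintro ⟨m, hm⟩
    exact ⟨m, fun a => by rw [← d₀₁_hom_apply, hm]⟩
  · rintro ⟨m, hm⟩
    have hd : (⟨_, d₀₁_apply_mem_cocycles₁ m⟩ : cocycles₁ A) = f :=
      cocycles₁_ext_freeGroup fun a => (d₀₁_hom_apply A m (of a)).trans (hm a)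
    exact ⟨m, congrArg Subtype.val hd⟩

end FreeGroup

end groupCohomology

namespace PowerSeries

variable {A : Type*} [CommRing A] [Algebra ℚ A]

theorem associated_X_exp_sub_one : Associated (X : A⟦X⟧) (exp A - 1) := by
  obtain ⟨u, hu⟩ : (X : A⟦X⟧) ∣ exp A - 1 := X_dvd_iff.2 (by simp)
  have hu₀ : constantCoeff u = 1 := by
    simpa [coeff_exp] using (congrArg (coeff 1) hu).symm
  exact ⟨(isUnit_iff_constantCoeff.2 (hu₀ ▸ isUnit_one)).unit, hu.symm⟩

theorem exp_sub_one_dvd_iff {f : A⟦X⟧} : exp A - 1 ∣ f ↔ constantCoeff f = 0 :=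
  associated_X_exp_sub_one.dvd_iff_dvd_left.symm.trans X_dvd_iff

theorem exp_mul_eq_self_iff {f : A⟦X⟧} : exp A * f = f ↔ f = 0 := by
  refine ⟨fun h => ?_, fun h => by rw [h, mul_zero]⟩
  obtain ⟨u, hu⟩ := associated_X_exp_sub_one (A := A)
  have : X * ((u : A⟦X⟧) * f) = X * 0 := by
    rw [← mul_assoc, hu, sub_mul, one_mul, h, sub_self, mul_zero]
  simpa using X_mul_cancel this

end PowerSeries

open groupCohomology FreeGroup

lemma logRep_of_true (m : ℚ⟦X⟧) : logRep (of true) m = exp ℚ * m := by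
  simp [logRep, freeGroupToUnits, expUnit]

lemma logRep_of_false (m : ℚ⟦X⟧) : logRep (of false) m = m := by
  simp [logRep, freeGroupToUnits]

noncomputable def logCocycleEval : cocycles₁ (Rep.of logRep) →ₗ[ℚ] ℚ × ℚ⟦X⟧ :=
  ((coeff 0 ∘ₗ LinearMap.proj true).prod (LinearMap.proj false)) ∘ₗ
    cocycles₁EquivFreeGroup.toLinearMap

lemma logCocycleEval_apply (f : cocycles₁ (Rep.of logRep)) :
    logCocycleEval f = (constantCoeff (f (of true)), f (of false)) := by
  simp [logCocycleEval]

lemma logCocycleEval_surjective : Function.Surjective logCocycleEval := by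
  rintro ⟨c, t⟩
  obtain ⟨f, hf⟩ :=
    exists_cocycles₁_freeGroup (A := Rep.of logRep) fun b => if b then C c else t
  exact ⟨f, by simp [logCocycleEval_apply, hf]⟩

lemma logCocycleEval_eq_zero_iff (f : cocycles₁ (Rep.of logRep)) :
    logCocycleEval f = 0 ↔ ⇑f ∈ coboundaries₁ (Rep.of logRep) := by
  simp only [logCocycleEval_apply, mem_coboundaries₁_iff_freeGroup, Bool.forall_bool,
    Prod.mk_eq_zero, ← exp_sub_one_dvd_iff, dvd_def, sub_one_mul, logRep_of_true, logRep_of_false,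
    sub_self]
  exact ⟨fun ⟨⟨m, hm⟩, h₀⟩ => ⟨m, h₀.symm, hm.symm⟩, fun ⟨m, h₀, hm⟩ => ⟨⟨m, hm.symm⟩, h₀.symm⟩⟩

/-- For the free group `F` on two generators acting on `M = ℚ⟦X⟧` with `a` acting as
multiplication by `exp X` and `b` acting as the identity, the group cohomology satisfies
`H⁰(F, M) = 0` and `H¹(F, M) ≅ ℚ × ℚ⟦X⟧` as `ℚ`-vector spaces. -/
theorem h0_eq_bot_and_h1_iso :
    (Rep.of logRep).ρ.invariants = ⊥ ∧
    Nonempty (groupCohomology.H1 (Rep.of logRep) ≃ₗ[ℚ] ℚ × PowerSeries ℚ) := by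
  refine ⟨(Submodule.eq_bot_iff _).2 fun m hm => ?_,
    ⟨H1EquivOfSurjective logCocycleEval logCocycleEval_surjective logCocycleEval_eq_zero_iff⟩⟩
  exact exp_mul_eq_self_iff.1 ((logRep_of_true m).symm.trans (hm (of true)))
end

section
/- Let F be the free group on two generators a and b, and let M = ℚ⟦X⟧ with a acting as multiplication by exp(X) and b acting as the identity. The function c : F → M determined by the cocycle conditions with c(a) = 0 and c(b) = 1 is a 1-cocycle whose class in H¹(F, M) is nonzero; equivalently, the extension of F-representations 0 → M → E → ℚ → 0, where E = ℚ·v ⊕ M with a·v = v and b·v = v + 1 (and the given action on M), does not split. (This extension of local systems is the one underlying the polylogarithm pol, which is therefore nontrivial.) -/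
/-!
Lifting the affine maps `x ↦ ρ a x + v a` of the generators gives an action `σ` of the free
group on `M`; the elements acting affinely with linear part `ρ` form a subgroup, hence all of
it, and the translation parts `g ↦ σ g 0` then form a cocycle taking the values `v` on
generators. It is not a coboundary because `b` acts trivially on `M`, so every coboundary
`g ↦ g • m - m` vanishes at `b`, whereas `c b = 1`.
-/

open PowerSeries

namespace Representation

variable {k G M : Type*} [CommSemiring k] [Group G] [AddCommGroup M] [Module k M]

def affineLocus (ρ : Representation k G M) (σ : G →* Equiv.Perm M) : Subgroup G where
  carrier := {g | ∀ x, σ g x = ρ g x + σ g 0}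
  one_mem' := by simp
  mul_mem' {g h} hg hh x := by
    simp only [Set.mem_ofPred_eq, map_mul, Equiv.Perm.mul_apply, Module.End.mul_apply] at *
    rw [hh, hg, hg (σ h 0), map_add, add_assoc]
  inv_mem' {g} hg y := by
    apply (σ g).injective
    rw [← Equiv.Perm.mul_apply, ← map_mul, mul_inv_cancel, map_one, Equiv.Perm.one_apply,
      hg, map_add, self_inv_apply, add_assoc, ← hg, ← Equiv.Perm.mul_apply, ← map_mul,
      mul_inv_cancel, map_one, Equiv.Perm.one_apply, add_zero]

def affineEquiv (ρ : Representation k G M) (g : G) (v : M) : Equiv.Perm M where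
  toFun x := ρ g x + v
  invFun y := ρ g⁻¹ (y - v)
  left_inv x := by simp [inv_self_apply]
  right_inv y := by simp [self_inv_apply]

theorem exists_cocycle_freeGroup {α : Type*} (ρ : Representation k (FreeGroup α) M)
    (v : α → M) :
    ∃ c : FreeGroup α → M,
      (∀ g h, c (g * h) = c g + ρ g (c h)) ∧ ∀ i, c (FreeGroup.of i) = v i := by
  let σ := FreeGroup.lift fun i => ρ.affineEquiv (FreeGroup.of i) (v i)
  have hσ_of (i : α) (x : M) : σ (FreeGroup.of i) x = ρ (FreeGroup.of i) x + v i := by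
    simp [σ, affineEquiv]
  have h_affine : ∀ g x, σ g x = ρ g x + σ g 0 := by
    suffices ⊤ ≤ ρ.affineLocus σ from fun g => this (Subgroup.mem_top g)
    rw [← FreeGroup.closure_range_of, Subgroup.closure_le]
    rintro _ ⟨i, rfl⟩ x
    simp [hσ_of]
  refine ⟨fun g => σ g 0, fun g h => ?_, fun i => by simp [hσ_of]⟩
  simp only [map_mul, Equiv.Perm.mul_apply, h_affine g (σ h 0), add_comm]

theorem not_exists_coboundary_of_apply_eq_one (ρ : Representation k G M) {c : G → M} {g : G}
    (hg : ρ g = 1) (hc : c g ≠ 0) : ¬ ∃ m, ∀ g, c g = ρ g m - m := by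
  rintro ⟨m, hm⟩
  rw [hm, hg, Module.End.one_apply, sub_self] at hc
  exact hc rfl

end Representation

theorem logRep_of_false_s10 : logRep (FreeGroup.of false) = 1 := by
  ext x
  simp [logRep, freeGroupToUnits]

/-- There is a 1-cocycle `c : F → ℚ⟦X⟧` for the above action of the free group `F` on two
generators with `c(a) = 0` and `c(b) = 1`; and any such cocycle is not a coboundary, i.e.
its class in `H¹(F, M)` is nonzero (equivalently, the corresponding extension
`0 → M → E → ℚ → 0` of `F`-representations does not split). -/
theorem polylog_cocycle_exists_and_nontrivial :
    (∃ c : FreeGroup Bool → PowerSeries ℚ,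
      (∀ g h : FreeGroup Bool, c (g * h) = c g + logRep g (c h)) ∧
      c (FreeGroup.of true) = 0 ∧ c (FreeGroup.of false) = 1) ∧
    (∀ c : FreeGroup Bool → PowerSeries ℚ,
      (∀ g h : FreeGroup Bool, c (g * h) = c g + logRep g (c h)) →
      c (FreeGroup.of true) = 0 → c (FreeGroup.of false) = 1 →
      ¬ ∃ m : PowerSeries ℚ, ∀ g : FreeGroup Bool, c g = logRep g m - m) := by
  constructor
  · obtain ⟨c, hc, hc_of⟩ := logRep.exists_cocycle_freeGroup fun i => if i then 0 else 1
    exact ⟨c, hc, hc_of true, hc_of false⟩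
  · intro c _ _ hb
    exact logRep.not_exists_coboundary_of_apply_eq_one logRep_of_false_s10 (hb ▸ one_ne_zero)
end

section
/- Let V be a finite-dimensional complex vector space equipped with a finite exhaustive increasing filtration W_• by subspaces and a finite exhaustive decreasing filtration F^• by subspaces, such that for every pair of integers (p, n) with n ≠ 2p the p-th graded piece of the filtration induced by F^• on Gr^W_n V vanishes (i.e. the induced F-grading on Gr^W_n V is concentrated in degree n/2). Then V decomposes as the direct sum V = ⊕_p (F^p ∩ W_{2p}), and for each p the natural map F^p ∩ W_{2p} → Gr^W_{2p} V is an isomorphism. (This is the fiberwise statement that the bifiltered vector bundle underlying a variation of Tate–Hodge structure is canonically split.) -/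
/-!
Iterating the hypothesis over the `p` with `2p ≠ n`, from a `p` where `F^p = V` or up to one where
`F^p = 0`, yields three facts: `F^p ∩ W_n = 0` for `n < 2p`, `F^p ∩ W_{2p} + W_{2p-1} = W_{2p}`,
and `W_n = W_{n-1}` for odd `n`. The first gives injectivity into `Gr^W_{2p}` and, by the modular
law, independence of the pieces `F^p ∩ W_{2p}`; the second gives surjectivity onto `Gr^W_{2p}`,
and together with the third an upward induction on `n` shows that the pieces span every `W_n`.
-/

namespace Submodule

variable {R M : Type*} [Ring R] [AddCommGroup M] [Module R M]

theorem injective_mkQ_comp_subtype_iff {U N : Submodule R M} :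
    Function.Injective (N.mkQ ∘ₗ U.subtype) ↔ Disjoint U N := by
  rw [← LinearMap.ker_eq_bot, LinearMap.ker_comp, ker_mkQ, disjoint_iff_comap_eq_bot]

theorem range_mkQ_comp_subtype (U N : Submodule R M) :
    LinearMap.range (N.mkQ ∘ₗ U.subtype) = map N.mkQ (U ⊔ N) := by
  rw [LinearMap.range_comp, range_subtype, map_sup, mkQ_map_self, sup_bot_eq]

end Submodule

section Bifiltration

variable {α : Type*}

/-- `Gr_F^p Gr^W_n = 0` for `n ≠ 2p`, phrased in the lattice of subobjects. -/
def IsOfTateType [Lattice α] (W F : ℤ → α) : Prop :=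
  ∀ p n : ℤ, n ≠ 2 * p → F p ⊓ W n ⊔ W (n - 1) = F (p + 1) ⊓ W n ⊔ W (n - 1)

namespace IsOfTateType

variable {W F : ℤ → α}

theorem inf_sup_eq_of_Ico [Lattice α] (hT : IsOfTateType W F) {n p q : ℤ} (hpq : p ≤ q)
    (hn : ∀ r ∈ Set.Ico p q, n ≠ 2 * r) :
    F p ⊓ W n ⊔ W (n - 1) = F q ⊓ W n ⊔ W (n - 1) := by
  induction q, hpq using Int.leInduction with
  | base => rfl
  | succ q hpq ih =>
    rw [ih fun r hr => hn r ⟨hr.1, by linarith [hr.2]⟩, hT q n (hn q ⟨hpq, by omega⟩)]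

theorem inf_le_pred [Lattice α] [OrderBot α] (hT : IsOfTateType W F) (hF : Antitone F)
    (hFbot : ∃ p, F p = ⊥) {p n : ℤ} (hn : n < 2 * p) : F p ⊓ W n ≤ W (n - 1) := by
  obtain ⟨q, hq⟩ := hFbot
  have hbot : F (max p q) = ⊥ := le_bot_iff.mp (hq ▸ hF (le_max_right p q))
  have h := hT.inf_sup_eq_of_Ico (n := n) (le_max_left p q) fun r hr => by
    simp only [Set.mem_Ico] at hr; omega
  rw [hbot, bot_inf_eq, bot_sup_eq] at h
  exact h ▸ le_sup_left

theorem inf_eq_bot [Lattice α] [OrderBot α] (hT : IsOfTateType W F) (hW : Monotone W)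
    (hF : Antitone F) (hWbot : ∃ n, W n = ⊥) (hFbot : ∃ p, F p = ⊥) {p n : ℤ}
    (hn : n < 2 * p) : F p ⊓ W n = ⊥ := by
  obtain ⟨n₀, hn₀⟩ := hWbot
  have hle : ∀ m ≤ n, F p ⊓ W n ≤ W m := by
    intro m hm
    induction m, hm using Int.leInductionDown with
    | base => exact inf_le_right
    | pred m hm ih =>
      exact (le_inf inf_le_left ih).trans (hT.inf_le_pred hF hFbot (by omega))
  exact le_bot_iff.mp (hn₀ ▸ (hle _ (min_le_left n n₀)).trans (hW (min_le_right n n₀)))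

theorem inf_sup_eq [Lattice α] [OrderTop α] (hT : IsOfTateType W F) (hW : Monotone W)
    (hF : Antitone F) (hFtop : ∃ p, F p = ⊤) (p : ℤ) :
    F p ⊓ W (2 * p) ⊔ W (2 * p - 1) = W (2 * p) := by
  obtain ⟨q, hq⟩ := hFtop
  have htop : F (min q p) = ⊤ := top_le_iff.mp (hq ▸ hF (min_le_left q p))
  have h := hT.inf_sup_eq_of_Ico (n := 2 * p) (min_le_right q p) fun r hr => by
    simp only [Set.mem_Ico] at hr; omega
  rw [htop, top_inf_eq, sup_eq_left.mpr (hW (by omega))] at h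
  exact h.symm

theorem eq_pred_of_odd [Lattice α] [BoundedOrder α] (hT : IsOfTateType W F) (hW : Monotone W)
    (hF : Antitone F) (hFtop : ∃ p, F p = ⊤) (hFbot : ∃ p, F p = ⊥) {n : ℤ} (hn : Odd n) :
    W n = W (n - 1) := by
  obtain ⟨p, hp⟩ := hFtop
  obtain ⟨q, hq⟩ := hFbot
  have htop : F (min p q) = ⊤ := top_le_iff.mp (hp ▸ hF (min_le_left p q))
  obtain ⟨k, rfl⟩ := hn
  have h := hT.inf_sup_eq_of_Ico (n := 2 * k + 1) (min_le_right p q) fun r _ => by omega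
  rwa [htop, top_inf_eq, sup_eq_left.mpr (hW (by omega)), hq, bot_inf_eq, bot_sup_eq] at h

end IsOfTateType

variable [CompleteLattice α] {W F : ℤ → α}

theorem iSupIndep_inf_two_mul [IsModularLattice α] (hW : Monotone W) (hF : Antitone F)
    (hbot : ∀ p n, n < 2 * p → F p ⊓ W n = ⊥) :
    iSupIndep fun p => F p ⊓ W (2 * p) := by
  refine iSupIndep_def.mpr fun p => ?_
  have hothers : (⨆ q, ⨆ (_ : q ≠ p), F q ⊓ W (2 * q)) ≤ W (2 * p - 2) ⊔ F (p + 1) := by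
    refine iSup₂_le fun q hq => ?_
    rcases hq.lt_or_gt with h | h
    · exact le_sup_of_le_left (inf_le_right.trans (hW (by omega)))
    · exact le_sup_of_le_right (inf_le_left.trans (hF (by omega)))
  have hmod : (W (2 * p - 2) ⊔ F (p + 1)) ⊓ W (2 * p) = W (2 * p - 2) := by
    rw [sup_inf_assoc_of_le _ (hW (by omega)), hbot (p + 1) (2 * p) (by omega), sup_bot_eq]
  refine disjoint_iff.mpr (le_bot_iff.mp ?_)
  calc F p ⊓ W (2 * p) ⊓ ⨆ q, ⨆ (_ : q ≠ p), F q ⊓ W (2 * q)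
      ≤ F p ⊓ ((W (2 * p - 2) ⊔ F (p + 1)) ⊓ W (2 * p)) :=
        le_inf (inf_le_left.trans inf_le_left) (le_inf (inf_le_right.trans hothers)
          (inf_le_left.trans inf_le_right))
    _ = ⊥ := by rw [hmod, hbot p _ (by omega)]

theorem iSup_inf_two_mul_eq_top (hW : Monotone W) (hWbot : ∃ n, W n = ⊥)
    (hWtop : ∃ n, W n = ⊤) (hgr : ∀ p, F p ⊓ W (2 * p) ⊔ W (2 * p - 1) = W (2 * p))
    (hodd : ∀ n, Odd n → W n = W (n - 1)) :
    ⨆ p, F p ⊓ W (2 * p) = ⊤ := by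
  obtain ⟨n₀, hn₀⟩ := hWbot
  obtain ⟨n₁, hn₁⟩ := hWtop
  have hle : ∀ n, n₀ ≤ n → W n ≤ ⨆ p, F p ⊓ W (2 * p) := by
    intro n hn
    induction n, hn using Int.leInduction with
    | base => exact hn₀ ▸ bot_le
    | succ n _ ih =>
      rcases Int.even_or_odd (n + 1) with ⟨k, hk⟩ | hk
      · rw [show n + 1 = 2 * k by omega, ← hgr k, show 2 * k - 1 = n by omega]
        exact sup_le (le_iSup (fun p => F p ⊓ W (2 * p)) k) ih
      · rwa [hodd _ hk, add_sub_cancel_right]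
  exact top_le_iff.mp (hn₁ ▸ (hW (le_max_left n₁ n₀)).trans (hle _ (le_max_right n₁ n₀)))

end Bifiltration

theorem tate_bifiltration_splits_general (V : Type*) [AddCommGroup V] [Module ℂ V]
    (W : ℤ → Submodule ℂ V) (F : ℤ → Submodule ℂ V)
    (hW : Monotone W) (hF : Antitone F)
    (hWbot : ∃ n : ℤ, W n = ⊥) (hWtop : ∃ n : ℤ, W n = ⊤)
    (hFtop : ∃ p : ℤ, F p = ⊤) (hFbot : ∃ p : ℤ, F p = ⊥)
    (hTate : ∀ p n : ℤ, n ≠ 2 * p →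
      ((F p ⊓ W n) ⊔ W (n - 1)) = ((F (p + 1) ⊓ W n) ⊔ W (n - 1))) :
    DirectSum.IsInternal (fun p : ℤ => F p ⊓ W (2 * p)) ∧
    ∀ p : ℤ,
      Function.Injective ((W (2 * p - 1)).mkQ ∘ₗ (F p ⊓ W (2 * p)).subtype) ∧
      LinearMap.range ((W (2 * p - 1)).mkQ ∘ₗ (F p ⊓ W (2 * p)).subtype) =
        Submodule.map (W (2 * p - 1)).mkQ (W (2 * p)) := by
  have hT : IsOfTateType W F := hTate
  have hbot : ∀ p n, n < 2 * p → F p ⊓ W n = ⊥ := fun p n hn =>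
    hT.inf_eq_bot hW hF hWbot hFbot hn
  have hgr := hT.inf_sup_eq hW hF hFtop
  refine ⟨(DirectSum.isInternal_submodule_iff_iSupIndep_and_iSup_eq_top _).mpr
    ⟨iSupIndep_inf_two_mul hW hF hbot, iSup_inf_two_mul_eq_top hW hWbot hWtop hgr
      fun n hn => hT.eq_pred_of_odd hW hF hFtop hFbot hn⟩, fun p => ⟨?_, ?_⟩⟩
  · rw [Submodule.injective_mkQ_comp_subtype_iff, disjoint_iff, inf_assoc,
      inf_eq_right.mpr (hW (by omega)), hbot p _ (by omega)]
  · rw [Submodule.range_mkQ_comp_subtype, hgr p]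

/-- Let `V` be a finite-dimensional complex vector space with a finite exhaustive increasing
filtration `W` and a finite exhaustive decreasing filtration `F`, such that for every pair
`(p, n)` with `n ≠ 2p` the `p`-th graded piece of the filtration induced by `F` on `Gr^W_n V`
vanishes (expressed as the equality `(F^p ⊓ W_n) ⊔ W_{n-1} = (F^{p+1} ⊓ W_n) ⊔ W_{n-1}`).
Then `V = ⊕_p (F^p ∩ W_{2p})`, and for each `p` the natural map
`F^p ∩ W_{2p} → Gr^W_{2p} V = W_{2p}/W_{2p-1}` (induced by the quotient map
`V → V/W_{2p-1}`) is injective with image `W_{2p}/W_{2p-1}`. -/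
theorem tate_bifiltration_splits (V : Type*) [AddCommGroup V] [Module ℂ V]
    [FiniteDimensional ℂ V]
    (W : ℤ → Submodule ℂ V) (F : ℤ → Submodule ℂ V)
    (hW : Monotone W) (hF : Antitone F)
    (hWbot : ∃ n : ℤ, W n = ⊥) (hWtop : ∃ n : ℤ, W n = ⊤)
    (hFtop : ∃ p : ℤ, F p = ⊤) (hFbot : ∃ p : ℤ, F p = ⊥)
    (hTate : ∀ p n : ℤ, n ≠ 2 * p →
      ((F p ⊓ W n) ⊔ W (n - 1)) = ((F (p + 1) ⊓ W n) ⊔ W (n - 1))) :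
    DirectSum.IsInternal (fun p : ℤ => F p ⊓ W (2 * p)) ∧
    ∀ p : ℤ,
      Function.Injective ((W (2 * p - 1)).mkQ ∘ₗ (F p ⊓ W (2 * p)).subtype) ∧
      LinearMap.range ((W (2 * p - 1)).mkQ ∘ₗ (F p ⊓ W (2 * p)).subtype) =
        Submodule.map (W (2 * p - 1)).mkQ (W (2 * p)) :=
  tate_bifiltration_splits_general V W F hW hF hWbot hWtop hFtop hFbot hTate
end
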